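/- arXiv:2201.08204 — 2 statements merged into one kernel-verified Lean document; each statement's English description precedes it below -/
import Mathlib

section
/- For any three vertices u, v, w of D_n', it is not the case that u→v, v→w, and u→w are all edges of D_n'. -/
/-- Vertex set of the digraph `D (n+1)` from the paper (`Vtx n` = vertices of `D_{n+1}`). -/
def Vtx : ℕ → Type
  | 0 => Unit
  | (n+1) => (Fin (n+1) × Vtx n) ⊕ ((i : Fin (n+1)) → Vtx n)

/-- Edge relation of `D_{n+1}`. -/
def DEdge : (n : ℕ) → Vtx n → Vtx n → Prop
  | 0, _, _ => False
  | (n+1), Sum.inl (i, x), Sum.inl (j, y) => i = j ∧ DEdge n x y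
  | (n+1), Sum.inl (i, x), Sum.inr T => T i = x
  | (_+1), Sum.inr _, _ => False

/-- There is a directed walk of length `k` from `u` to `v`. -/
def WalkLen {V : Type*} (E : V → V → Prop) (u v : V) (k : ℕ) : Prop :=
  ∃ f : Fin (k+1) → V, f 0 = u ∧ f (Fin.last k) = v ∧
    ∀ i : Fin k, E (f i.castSucc) (f i.succ)

/-- `l` is a directed path (as a list of distinct vertices) from `u` to `v`. -/
def IsDPath {V : Type*} (E : V → V → Prop) (u v : V) (l : List V) : Prop :=
  l.Chain' E ∧ l.Nodup ∧ l.head? = some u ∧ l.getLast? = some v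

/-- Positive edges of `D'`. -/
def PosE {V : Type*} (E : V → V → Prop) (u v : V) : Prop :=
  ∃ k, k % 3 = 1 ∧ WalkLen E u v k

/-- Negative edges of `D'`. -/
def NegE {V : Type*} (E : V → V → Prop) (u v : V) : Prop :=
  ∃ k, k % 3 = 2 ∧ WalkLen E v u k

/-- Edge relation of `D_{n+1}'`. -/
def DEdge' (n : ℕ) (u v : Vtx n) : Prop :=
  PosE (DEdge n) u v ∨ NegE (DEdge n) u v

/-- Underlying undirected graph of a digraph. -/
def underSG {V : Type*} (E : V → V → Prop) : SimpleGraph V :=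
  SimpleGraph.fromRel E

/-- `G_{n+1}`, the underlying undirected graph of `D_{n+1}'`. -/
def Gn (n : ℕ) : SimpleGraph (Vtx n) := underSG (DEdge' n)

/-- A digraph is acyclic iff no vertex lies on a directed cycle. -/
def DAcyclic {V : Type*} (E : V → V → Prop) : Prop :=
  ∀ v : V, ¬ Relation.TransGen E v v

/-- `k`-dicolorability. -/
def Dicolorable {V : Type*} (E : V → V → Prop) (k : ℕ) : Prop :=
  ∃ f : V → Fin k, ∀ c : Fin k,
    DAcyclic (fun a b => E a b ∧ f a = c ∧ f b = c)

/-- `D` has an induced directed cycle of odd length at least 5. -/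
def HasInducedOddCycle {V : Type*} (E : V → V → Prop) : Prop :=
  ∃ m : ℕ, 5 ≤ m ∧ Odd m ∧ ∃ f : ZMod m → V, Function.Injective f ∧
    (∀ i, E (f i) (f (i+1))) ∧ (∀ i j, E (f i) (f j) → j = i + 1)
section Aux

variable {V : Type*} {E : V → V → Prop}

/-- Inductive characterization of walks. -/
inductive W (E : V → V → Prop) : V → V → ℕ → Prop
  | refl (v : V) : W E v v 0
  | cons {u x v : V} {k : ℕ} : E u x → W E x v k → W E u v (k+1)

lemma walkLen_zero {u v : V} : WalkLen E u v 0 ↔ u = v := by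
  constructor
  · rintro ⟨f, h0, hl, _⟩
    rw [← h0, ← hl]; rfl
  · rintro rfl
    exact ⟨fun _ => u, rfl, rfl, fun i => i.elim0⟩

lemma walkLen_succ {u v : V} {k : ℕ} :
    WalkLen E u v (k+1) ↔ ∃ x, E u x ∧ WalkLen E x v k := by
  constructor
  · rintro ⟨f, h0, hl, he⟩
    refine ⟨f 1, ?_, fun i => f i.succ, rfl, ?_, fun i => ?_⟩
    · have := he 0
      simpa [h0] using this
    · show f (Fin.last k).succ = v
      rw [Fin.succ_last]; exact hl
    · have := he i.succ
      show E (f i.castSucc.succ) (f i.succ.succ)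
      rwa [Fin.succ_castSucc]
  · rintro ⟨x, hux, f, h0, hl, he⟩
    refine ⟨Fin.cons u f, rfl, ?_, fun i => ?_⟩
    · rw [← Fin.succ_last, Fin.cons_succ]; exact hl
    · induction i using Fin.cases with
      | zero => simp [h0, hux]
      | succ j => simpa [← Fin.succ_castSucc] using he j

lemma walk_iff_W {u v : V} {k : ℕ} : WalkLen E u v k ↔ W E u v k := by
  induction k generalizing u with
  | zero =>
    rw [walkLen_zero]
    constructor
    · rintro rfl; exact W.refl u
    · rintro h; cases h; rfl
  | succ k ih =>
    rw [walkLen_succ]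
    constructor
    · rintro ⟨x, hx, hw⟩; exact W.cons hx (ih.mp hw)
    · rintro h
      cases h with
      | cons hx hw => exact ⟨_, hx, ih.mpr hw⟩

lemma W_trans {u v w : V} {a b : ℕ} (h1 : W E u v a) (h2 : W E v w b) :
    W E u w (a + b) := by
  induction h1 with
  | refl => rwa [Nat.zero_add]
  | cons hx _ ih => rw [Nat.succ_add]; exact W.cons hx (ih h2)

end Aux

lemma W_inr {n : ℕ} {T : (i : Fin (n+1)) → Vtx n} {v : Vtx (n+1)} {k : ℕ}
    (h : W (DEdge (n+1)) (Sum.inr T) v k) : k = 0 ∧ v = Sum.inr T := by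
  cases h with
  | refl => exact ⟨rfl, rfl⟩
  | cons hx _ => exact absurd hx (by simp [DEdge])

lemma W_inl_inl {n : ℕ} {i j : Fin (n+1)} {x y : Vtx n} {k : ℕ}
    (h : W (DEdge (n+1)) (Sum.inl (i, x)) (Sum.inl (j, y)) k) :
    i = j ∧ W (DEdge n) x y k := by
  induction k generalizing x with
  | zero =>
    cases h with
    | refl => exact ⟨rfl, W.refl y⟩
  | succ k ih =>
    cases h with
    | cons hx hw =>
      rename_i z
      match z with
      | Sum.inl (i', x') =>
        obtain ⟨rfl, he⟩ : i = i' ∧ DEdge n x x' := hx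
        obtain ⟨hij, hw'⟩ := ih hw
        exact ⟨hij, W.cons he hw'⟩
      | Sum.inr T =>
        obtain ⟨-, h2⟩ := W_inr hw
        exact absurd h2 (by simp)

lemma W_inl_inr {n : ℕ} {i : Fin (n+1)} {x : Vtx n} {T : (i : Fin (n+1)) → Vtx n} {k : ℕ}
    (h : W (DEdge (n+1)) (Sum.inl (i, x)) (Sum.inr T) k) :
    ∃ k', k = k' + 1 ∧ W (DEdge n) x (T i) k' := by
  induction k generalizing x with
  | zero => cases h
  | succ k ih =>
    cases h with
    | cons hx hw =>
      rename_i z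
      match z with
      | Sum.inl (i', x') =>
        obtain ⟨rfl, he⟩ : i = i' ∧ DEdge n x x' := hx
        obtain ⟨k', rfl, hw'⟩ := ih hw
        exact ⟨k' + 1, rfl, W.cons he hw'⟩
      | Sum.inr T' =>
        obtain ⟨rfl, h2⟩ := W_inr hw
        injection h2 with h2
        subst h2
        have hTi : T i = x := hx
        exact ⟨0, rfl, by rw [hTi]; exact W.refl x⟩

lemma W_uniq : ∀ (n : ℕ) (u v : Vtx n) (k k' : ℕ),
    W (DEdge n) u v k → W (DEdge n) u v k' → k = k' := by
  intro n
  induction n with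
  | zero =>
    intro u v k k' h h'
    have h0 : ∀ (a b : Vtx 0) (m : ℕ), W (DEdge 0) a b m → m = 0 := by
      intro a b m hm
      cases hm with
      | refl => rfl
      | cons hx _ => exact absurd hx (by simp [DEdge])
    rw [h0 _ _ _ h, h0 _ _ _ h']
  | succ n ih =>
    rintro (⟨i, x⟩ | T) v k k' h h'
    · match v with
      | Sum.inl (j, y) =>
        obtain ⟨-, hw⟩ := W_inl_inl h
        obtain ⟨-, hw'⟩ := W_inl_inl h'
        exact ih _ _ _ _ hw hw'
      | Sum.inr T =>
        obtain ⟨a, rfl, hw⟩ := W_inl_inr h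
        obtain ⟨b, rfl, hw'⟩ := W_inl_inr h'
        rw [ih _ _ _ _ hw hw']
    · obtain ⟨rfl, -⟩ := W_inr h
      obtain ⟨rfl, -⟩ := W_inr h'
      rfl

/-- `D_n'` has no transitive triangle. -/
theorem Dn'_no_transitive_triangle (n : ℕ) (u v w : Vtx n) :
    ¬ (DEdge' n u v ∧ DEdge' n v w ∧ DEdge' n u w) := by
  rintro ⟨h1, h2, h3⟩
  obtain (⟨a, ha, wa⟩ | ⟨a, ha, wa⟩) := h1 <;>
    obtain (⟨b, hb, wb⟩ | ⟨b, hb, wb⟩) := h2 <;>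
      obtain (⟨c, hc, wc⟩ | ⟨c, hc, wc⟩) := h3 <;>
        rw [walk_iff_W] at wa wb wc
  · have := W_uniq n _ _ _ _ (W_trans wa wb) wc; omega
  · have := W_uniq n _ _ _ _ (W_trans (W_trans wa wb) wc) (W.refl u); omega
  · have := W_uniq n _ _ _ _ (W_trans wc wb) wa; omega
  · have := W_uniq n _ _ _ _ (W_trans wc wa) wb; omega
  · have := W_uniq n _ _ _ _ (W_trans wa wc) wb; omega
  · have := W_uniq n _ _ _ _ (W_trans wb wc) wa; omega
  · have := W_uniq n _ _ _ _ (W_trans (W_trans wc wb) wa) (W.refl u); omega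
  · have := W_uniq n _ _ _ _ (W_trans wb wa) wc; omega
end

section
/- For every n ≥ 2, any proper coloring of the underlying undirected graph of D_n with colors from {1, …, n−1} leads to a contradiction: if each copy D_{n−1}^i contains a vertex x_i of color i, then the transversal vertex v_T for T = (x_1,…,x_{n−1}) has no available color. -/
/-! Induction on `n`. As `D_n` is not `(n-1)`-colorable, an `n`-coloring of `D_{n+1}` uses all `n`
colors on each of the `n` copies of `D_n`. Choosing in copy `i` a vertex `x_i` of color `i`, the
transversal vertex over `(x_i)_i` is adjacent to every color. -/

open SimpleGraph

lemma SimpleGraph.Coloring.surjective_of_not_colorable {V : Type*} {G : SimpleGraph V} {k : ℕ}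
    (hG : ¬ G.Colorable k) (C : G.Coloring (Fin (k + 1))) : Function.Surjective C := by
  refine le_chromaticNumber_iff_forall_surjective.mp ?_ C
  rw [← chromaticNumber_le_iff_colorable, not_le] at hG
  exact_mod_cast Order.add_one_le_of_lt hG

def underSGHom {V W : Type*} {E : V → V → Prop} {E' : W → W → Prop} (f : V → W)
    (hf : Function.Injective f) (hE : ∀ x y, E x y → E' (f x) (f y)) :
    underSG E →g underSG E' where
  toFun := f
  map_rel' {x y} h := by
    rw [underSG, fromRel_adj] at h ⊢
    exact ⟨hf.ne h.1, h.2.imp (hE x y) (hE y x)⟩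

def DEdge.copyHom (n : ℕ) (i : Fin (n + 1)) : underSG (DEdge n) →g underSG (DEdge (n + 1)) :=
  underSGHom (fun x => Sum.inl (i, x)) (Sum.inl_injective.comp (Prod.mk_right_injective i))
    fun _ _ h => ⟨rfl, h⟩

lemma DEdge.adj_transversal (n : ℕ) (T : Fin (n + 1) → Vtx n) (i : Fin (n + 1)) :
    (underSG (DEdge (n + 1))).Adj (Sum.inl (i, T i)) (Sum.inr T) :=
  (fromRel_adj _ _ _).mpr ⟨Sum.inl_ne_inr, Or.inl rfl⟩

theorem DEdge.not_colorable (n : ℕ) : ¬ (underSG (DEdge n)).Colorable n := by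
  induction n with
  | zero =>
    rintro ⟨C⟩
    exact (C (show Vtx 0 from ())).elim0
  | succ n ih =>
    rintro ⟨C⟩
    have hsurj (i : Fin (n + 1)) : Function.Surjective (C.comp (copyHom n i)) :=
      Coloring.surjective_of_not_colorable ih _
    choose x hx using fun i => hsurj i i
    exact C.valid (adj_transversal n x (C (Sum.inr x))) (hx _)

/-- for `n ≥ 2` the underlying graph of `D_n` is not `(n-1)`-colorable
(here `Vtx (n+1)` is `D_{n+2}`, which is not `(n+1)`-colorable). -/
theorem Dn_not_colorable (n : ℕ) : ¬ (underSG (DEdge (n+1))).Colorable (n+1) :=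
  DEdge.not_colorable (n + 1)
end
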